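/- For every bounded linear operator A on a complex Hilbert space, r(A) ≤ ((1/4)·‖|A²|² + |(A*)²|²‖ + (1/2)·w(A⁴))^{1/4}, where r is the spectral radius and w the numerical radius. -/

import Mathlib

open scoped InnerProductSpace

variable {H : Type*} [NormedAddCommGroup H] [InnerProductSpace ℂ H] [CompleteSpace H]

/-- The numerical radius of a bounded linear operator. -/
noncomputable def numRad (A : H →L[ℂ] H) : ℝ :=
  sSup {r : ℝ | ∃ x : H, ‖x‖ = 1 ∧ r = ‖⟪A x, x⟫_ℂ‖}

/-- The absolute value `|A| = (A*A)^(1/2)` of a bounded linear operator. -/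
noncomputable def oabs (A : H →L[ℂ] H) : H →L[ℂ] H :=
  CFC.sqrt (ContinuousLinearMap.adjoint A * A)

/-- The spectral radius (as a real number). -/
noncomputable def specRad (A : H →L[ℂ] H) : ℝ := (spectralRadius ℂ A).toReal

/-!
For `z ∈ σ(A)` we have `z² ∈ σ(A²)`, and every spectral value of an operator is bounded by its
numerical radius (if `|z| > w(B)` then `z - B` is bounded below in the quadratic-form sense, hence
invertible). Thus `r(A)⁴ ≤ w(A²)²`, and Kittaneh's bound
`w(T)² ≤ ¼‖T*T + TT*‖ + ½w(T²)` for `T = A²` gives the claim, since `|A²|² = (A²)*A²` and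
`|(A*)²|² = A²(A²)*`.
-/

open ContinuousLinearMap

lemma exists_norm_eq_one_mul_eq_norm (d : ℂ) : ∃ u : ℂ, ‖u‖ = 1 ∧ u * d = ‖d‖ := by
  refine ⟨Complex.exp (-Complex.arg d * Complex.I),
    by exact_mod_cast Complex.norm_exp_ofReal_mul_I _, ?_⟩
  conv_lhs => rw [← Complex.norm_mul_exp_arg_mul_I d]
  rw [mul_left_comm, ← Complex.exp_add]
  simp

section

variable {E : Type*} [NormedAddCommGroup E] [InnerProductSpace ℂ E]

lemma bddAbove_numRad_set (A : E →L[ℂ] E) :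
    BddAbove {r : ℝ | ∃ x : E, ‖x‖ = 1 ∧ r = ‖⟪A x, x⟫_ℂ‖} := by
  refine ⟨‖A‖, ?_⟩
  rintro _ ⟨x, hx, rfl⟩
  calc ‖⟪A x, x⟫_ℂ‖ ≤ ‖A x‖ * ‖x‖ := norm_inner_le_norm _ _
    _ ≤ ‖A‖ * ‖x‖ * ‖x‖ := by gcongr; exact A.le_opNorm x
    _ = ‖A‖ := by rw [hx, mul_one, mul_one]

lemma numRad_nonneg (A : E →L[ℂ] E) : 0 ≤ numRad A :=
  Real.sSup_nonneg <| by rintro _ ⟨x, -, rfl⟩; exact norm_nonneg _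

lemma norm_inner_le_numRad (A : E →L[ℂ] E) {x : E} (hx : ‖x‖ = 1) :
    ‖⟪A x, x⟫_ℂ‖ ≤ numRad A :=
  le_csSup (bddAbove_numRad_set A) ⟨x, hx, rfl⟩

lemma norm_inner_le_numRad_mul_sq (A : E →L[ℂ] E) (x : E) :
    ‖⟪A x, x⟫_ℂ‖ ≤ numRad A * ‖x‖ ^ 2 := by
  rcases eq_or_ne x 0 with rfl | hx
  · simp
  have hx' : ‖x‖ ≠ 0 := norm_ne_zero_iff.mpr hx
  have hunit := norm_inner_le_numRad A (norm_smul_inv_norm (𝕜 := ℂ) hx)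
  rw [map_smul, inner_smul_left, inner_smul_right, norm_mul, norm_mul, RingHomIsometric.norm_map,
    norm_inv, RCLike.norm_ofReal, abs_norm, ← mul_assoc, ← sq, inv_pow,
    inv_mul_le_iff₀ (by positivity), mul_comm] at hunit
  exact hunit

lemma specRad_le_of_forall_norm_le (A : E →L[ℂ] E) {c : ℝ} (hc : 0 ≤ c)
    (h : ∀ z ∈ spectrum ℂ A, ‖z‖ ≤ c) : specRad A ≤ c := by
  refine ENNReal.toReal_le_of_le_ofReal hc (iSup₂_le fun z hz => ?_)
  rw [← enorm_eq_nnnorm, ← ofReal_norm]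
  exact ENNReal.ofReal_le_ofReal (h z hz)

end

lemma norm_le_numRad_of_mem_spectrum (A : H →L[ℂ] H) {z : ℂ} (hz : z ∈ spectrum ℂ A) :
    ‖z‖ ≤ numRad A := by
  by_contra! h
  have hc : 0 < ‖z‖ - numRad A := sub_pos.mpr h
  refine spectrum.mem_iff.mp hz <| isUnit_of_forall_le_norm_inner_map _
    (c := ⟨‖z‖ - numRad A, hc.le⟩) hc fun x => ?_
  have hinner : ⟪(algebraMap ℂ (H →L[ℂ] H) z - A) x, x⟫_ℂ
      = (starRingEnd ℂ) z * (‖x‖ ^ 2 : ℝ) - ⟪A x, x⟫_ℂ := by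
    rw [sub_apply, inner_sub_left, Algebra.algebraMap_eq_smul_one, smul_apply, one_apply_eq_self,
      inner_smul_left, inner_self_eq_norm_sq_to_K, Complex.ofReal_pow]
    rfl
  calc ‖x‖ ^ 2 * (⟨‖z‖ - numRad A, hc.le⟩ : NNReal)
      = ‖z‖ * ‖x‖ ^ 2 - numRad A * ‖x‖ ^ 2 := by push_cast; ring
    _ ≤ ‖(starRingEnd ℂ) z * (‖x‖ ^ 2 : ℝ)‖ - ‖⟪A x, x⟫_ℂ‖ := by
      rw [norm_mul, RingHomIsometric.norm_map, Complex.norm_real,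
        Real.norm_of_nonneg (by positivity)]
      linarith [norm_inner_le_numRad_mul_sq A x]
    _ ≤ ‖⟪(algebraMap ℂ (H →L[ℂ] H) z - A) x, x⟫_ℂ‖ := hinner ▸ norm_sub_norm_le _ _

lemma norm_apply_sq_add_norm_adjoint_apply_sq_le (T : H →L[ℂ] H) (x : H) :
    ‖T x‖ ^ 2 + ‖adjoint T x‖ ^ 2 ≤ ‖adjoint T * T + T * adjoint T‖ * ‖x‖ ^ 2 := by
  have hT := apply_norm_sq_eq_inner_adjoint_left T x
  have hT' := apply_norm_sq_eq_inner_adjoint_left (adjoint T) x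
  rw [adjoint_adjoint] at hT'
  calc ‖T x‖ ^ 2 + ‖adjoint T x‖ ^ 2
        = RCLike.re ⟪(adjoint T * T + T * adjoint T) x, x⟫_ℂ := by
        rw [hT, hT', add_apply, inner_add_left, map_add]; rfl
    _ ≤ ‖(adjoint T * T + T * adjoint T) x‖ * ‖x‖ := re_inner_le_norm _ _
    _ ≤ ‖adjoint T * T + T * adjoint T‖ * ‖x‖ ^ 2 := by
        rw [sq, ← mul_assoc]; gcongr; exact le_opNorm _ _

/-- Kittaneh's argument: with `u * ⟪T x, x⟫ = ‖⟪T x, x⟫‖` and `‖u‖ = 1`, the vector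
`y = ū • T x + u • T† x` has `⟪y, x⟫ = 2 ‖⟪T x, x⟫‖`, while `‖y‖²` expands to
`‖T x‖² + ‖T† x‖² + 2 re (u² ⟪T² x, x⟫)`. -/
lemma four_mul_norm_inner_sq_le (T : H →L[ℂ] H) (x : H) :
    4 * ‖⟪T x, x⟫_ℂ‖ ^ 2 ≤
      (‖T x‖ ^ 2 + ‖adjoint T x‖ ^ 2 + 2 * ‖⟪(T ^ 2) x, x⟫_ℂ‖) * ‖x‖ ^ 2 := by
  obtain ⟨u, hu, hud⟩ := exists_norm_eq_one_mul_eq_norm ⟪T x, x⟫_ℂ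
  set y := starRingEnd ℂ u • T x + u • adjoint T x
  have hy_inner : ⟪y, x⟫_ℂ = 2 * ‖⟪T x, x⟫_ℂ‖ := by
    have : ⟪adjoint T x, x⟫_ℂ = starRingEnd ℂ ⟪T x, x⟫_ℂ := by
      rw [adjoint_inner_left, inner_conj_symm]
    rw [inner_add_left, inner_smul_left, inner_smul_left, Complex.conj_conj, this, ← map_mul,
      hud, Complex.conj_ofReal]
    ring
  have hy_norm : ‖y‖ ^ 2 =
      ‖T x‖ ^ 2 + ‖adjoint T x‖ ^ 2 + 2 * RCLike.re (u ^ 2 * ⟪(T ^ 2) x, x⟫_ℂ) := by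
    have : ⟪starRingEnd ℂ u • T x, u • adjoint T x⟫_ℂ = u ^ 2 * ⟪(T ^ 2) x, x⟫_ℂ := by
      rw [inner_smul_left, inner_smul_right, Complex.conj_conj, adjoint_inner_right, pow_two T,
        mul_apply_eq_comp]
      ring
    rw [norm_add_sq (𝕜 := ℂ), this, norm_smul, norm_smul, RingHomIsometric.norm_map, hu, one_mul,
      one_mul]
    ring
  have hre : RCLike.re (u ^ 2 * ⟪(T ^ 2) x, x⟫_ℂ) ≤ ‖⟪(T ^ 2) x, x⟫_ℂ‖ :=
    calc RCLike.re (u ^ 2 * ⟪(T ^ 2) x, x⟫_ℂ)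
        ≤ ‖u ^ 2 * ⟪(T ^ 2) x, x⟫_ℂ‖ := RCLike.re_le_norm _
      _ = ‖⟪(T ^ 2) x, x⟫_ℂ‖ := by rw [norm_mul, norm_pow, hu, one_pow, one_mul]
  have hd : 2 * ‖⟪T x, x⟫_ℂ‖ ≤ ‖y‖ * ‖x‖ := by
    simpa [hy_inner] using norm_inner_le_norm (𝕜 := ℂ) y x
  calc 4 * ‖⟪T x, x⟫_ℂ‖ ^ 2 = (2 * ‖⟪T x, x⟫_ℂ‖) ^ 2 := by ring
    _ ≤ (‖y‖ * ‖x‖) ^ 2 := by gcongr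
    _ = ‖y‖ ^ 2 * ‖x‖ ^ 2 := mul_pow _ _ _
    _ ≤ _ := by rw [hy_norm]; gcongr

lemma numRad_sq_le (T : H →L[ℂ] H) :
    numRad T ^ 2 ≤ 1 / 4 * ‖adjoint T * T + T * adjoint T‖ + 1 / 2 * numRad (T ^ 2) := by
  have hK : 0 ≤ 1 / 4 * ‖adjoint T * T + T * adjoint T‖ + 1 / 2 * numRad (T ^ 2) := by
    have := numRad_nonneg (T ^ 2)
    positivity
  rw [← Real.le_sqrt (numRad_nonneg T) hK]
  refine Real.sSup_le ?_ (Real.sqrt_nonneg _)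
  rintro _ ⟨x, hx, rfl⟩
  rw [Real.le_sqrt (norm_nonneg _) hK]
  have h1 := four_mul_norm_inner_sq_le T x
  have h2 := norm_apply_sq_add_norm_adjoint_apply_sq_le T x
  have h3 := norm_inner_le_numRad (T ^ 2) hx
  rw [hx] at h1 h2
  linarith

lemma oabs_sq (B : H →L[ℂ] H) : oabs B ^ 2 = adjoint B * B :=
  CFC.sq_sqrt _ (by rw [← star_eq_adjoint]; exact star_mul_self_nonneg B)

lemma oabs_sq_add_oabs_adjoint_sq (B : H →L[ℂ] H) :
    oabs B ^ 2 + oabs (adjoint B) ^ 2 = adjoint B * B + B * adjoint B := by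
  rw [oabs_sq, oabs_sq, adjoint_adjoint]

theorem stmt17 (A : H →L[ℂ] H) :
    specRad A ≤
      ((1 / 4) * ‖oabs (A ^ 2) ^ 2 + oabs (ContinuousLinearMap.adjoint A ^ 2) ^ 2‖
        + (1 / 2) * numRad (A ^ 4)) ^ ((1 : ℝ) / 4) := by
  set K := (1 / 4) * ‖oabs (A ^ 2) ^ 2 + oabs (ContinuousLinearMap.adjoint A ^ 2) ^ 2‖
    + (1 / 2) * numRad (A ^ 4)
  have hK : numRad (A ^ 2) ^ 2 ≤ K := by
    have h := numRad_sq_le (A ^ 2)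
    rwa [← pow_mul, ← oabs_sq_add_oabs_adjoint_sq, ← star_eq_adjoint, star_pow] at h
  have hK0 : 0 ≤ K := (sq_nonneg _).trans hK
  refine specRad_le_of_forall_norm_le A (by positivity) fun z hz => ?_
  rw [one_div, Real.le_rpow_inv_iff_of_pos (norm_nonneg z) hK0 (by norm_num)]
  calc ‖z‖ ^ (4 : ℝ) = (‖z‖ ^ 2) ^ 2 := by norm_cast; rw [← pow_mul]
    _ ≤ numRad (A ^ 2) ^ 2 := by
      rw [← norm_pow]
      gcongr
      exact norm_le_numRad_of_mem_spectrum _ (spectrum.pow_image_subset A 2 ⟨z, hz, rfl⟩)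
    _ ≤ K := hK
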